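/- For every language L ⊆ Σ^ω: if the pair (u,v) is pointed, then for every letter a ∈ Σ, either (u,va) ≈_L ⊥ or (u,va) is pointed. -/

import Mathlib

open Classical

/-- Rank of a transition in a co-Büchi automaton: `one` or `two`. -/
inductive Rk | one | two
deriving DecidableEq

/-- A co-Büchi automaton over alphabet `A` with state type `Q`:
initial states and a transition relation where each transition carries a rank. -/
structure CoBuchi (A : Type) (Q : Type) where
  init : Set Q
  delta : Set (Q × A × Rk × Q)

namespace CoBuchi

variable {A Q : Type}

/-- Every state has an outgoing transition on every letter. -/
def Total (M : CoBuchi A Q) : Prop :=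
  ∀ q a, ∃ r q', (q, a, r, q') ∈ M.delta

/-- The prefix `α[0..n-1]` of an infinite word. -/
def prefW (α : ℕ → A) (n : ℕ) : List A := (List.range n).map α

/-- The infinite word `a·w`. -/
def consW (a : A) (w : ℕ → A) : ℕ → A := fun n => match n with
  | 0 => a
  | Nat.succ k => w k

/-- `L(M,q)`: infinite words having a run from `q` with only finitely many rank-1
transitions. -/
def LangFrom (M : CoBuchi A Q) (q : Q) : Set (ℕ → A) :=
  { w | ∃ (ρ : ℕ → Q) (r : ℕ → Rk), ρ 0 = q ∧
        (∀ n, (ρ n, w n, r n, ρ (n + 1)) ∈ M.delta) ∧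
        ∃ N, ∀ n, N ≤ n → r n = Rk.two }

/-- `L(M)`: the language of the automaton. -/
def Lang (M : CoBuchi A Q) : Set (ℕ → A) :=
  { w | ∃ q ∈ M.init, w ∈ M.LangFrom q }

/-- `q →₂^w q'`: a finite run from `q` to `q'` on `w` using only rank-2 transitions. -/
def SafeReach (M : CoBuchi A Q) : Q → List A → Q → Prop
  | q, [], q' => q = q'
  | q, a :: w, q' => ∃ p, (q, a, Rk.two, p) ∈ M.delta ∧ SafeReach M p w q'

/-- A finite run from `q` to `q'` on `w` using transitions of any rank. -/
def Reach (M : CoBuchi A Q) : Q → List A → Q → Prop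
  | q, [], q' => q = q'
  | q, a :: w, q' => ∃ r p, (q, a, r, p) ∈ M.delta ∧ Reach M p w q'

/-- Safe language of a state. -/
def Lsf (M : CoBuchi A Q) (q : Q) : Set (List A) := { w | ∃ q', M.SafeReach q w q' }

/-- Semantically-deterministic: every transition respects residuals. -/
def SemDet (M : CoBuchi A Q) : Prop :=
  ∀ p a rk q, (p, a, rk, q) ∈ M.delta →
    M.LangFrom q = { w | consW a w ∈ M.LangFrom p }

/-- Unsafe-saturated: all residual-respecting rank-1 transitions are present. -/
def UnsafeSat (M : CoBuchi A Q) : Prop :=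
  ∀ p a q, M.LangFrom q = { w | consW a w ∈ M.LangFrom p } →
    (p, a, Rk.one, q) ∈ M.delta

/-- Safe-deterministic: at most one rank-2 transition per state and letter. -/
def SafeDet (M : CoBuchi A Q) : Prop :=
  ∀ p a q q', (p, a, Rk.two, q) ∈ M.delta → (p, a, Rk.two, q') ∈ M.delta → q = q'

/-- Normalized: every rank-2 transition can be completed to a rank-2 loop. -/
def Normalized (M : CoBuchi A Q) : Prop :=
  ∀ q a q', (q, a, Rk.two, q') ∈ M.delta → ∃ x, M.SafeReach q' x q

/-- Deterministic: one initial state, exactly one transition per state and letter. -/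
def Deterministic (M : CoBuchi A Q) : Prop :=
  (∃! q, q ∈ M.init) ∧ ∀ p a, ∃! t : Rk × Q, (p, a, t.1, t.2) ∈ M.delta

/-- History-deterministic: a strategy `σ : Σ* → Q` resolving the nondeterminism,
whose run on every `α ∈ L(M)` can be ranked with finitely many rank-1 transitions. -/
def HistoryDet (M : CoBuchi A Q) : Prop :=
  ∃ σ : List A → Q, σ [] ∈ M.init ∧
    (∀ w a, ∃ rk, (σ w, a, rk, σ (w ++ [a])) ∈ M.delta) ∧
    ∀ α ∈ M.Lang, ∃ r : ℕ → Rk,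
      (∀ n, (σ (prefW α n), α n, r n, σ (prefW α (n + 1))) ∈ M.delta) ∧
      ∃ N, ∀ n, N ≤ n → r n = Rk.two

/-- `q` and `q'` are in the same safe SCC (mutually reachable via rank-2 runs). -/
def SameSafeSCC (M : CoBuchi A Q) (q q' : Q) : Prop :=
  (∃ x, M.SafeReach q x q') ∧ (∃ y, M.SafeReach q' y q)

end CoBuchi

section LangDefs

variable {A : Type} [Nonempty A]

/-- The infinite word `u·w`. -/
def appW (u : List A) (w : ℕ → A) : ℕ → A :=
  fun n => if h : n < u.length then u.get ⟨n, h⟩ else w (n - u.length)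

/-- The infinite word `v^ω` (arbitrary if `v = ε`). -/
noncomputable def iterW (v : List A) : ℕ → A :=
  fun n =>
    if h : v = [] then Classical.arbitrary A
    else v.get ⟨n % v.length, Nat.mod_lt _ (List.length_pos_iff.mpr h)⟩

/-- The ultimately periodic word `u v^ω`. -/
noncomputable def upW (u v : List A) : ℕ → A := appW u (iterW v)

/-- The right congruence `u ∼_L v`. -/
def SimL (L : Set (ℕ → A)) (u v : List A) : Prop :=
  ∀ w : ℕ → A, appW u w ∈ L ↔ appW v w ∈ L

/-- `(u,v) ≈_L ⊥`: `v ≠ ε` and `u(vx)^ω ∉ L` for all `x` with `uvx ∼_L u`. -/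
def ApproxBot (L : Set (ℕ → A)) (u v : List A) : Prop :=
  v ≠ [] ∧ ∀ x : List A, SimL L (u ++ v ++ x) u → upW u (v ++ x) ∉ L

/-- The safe language of a pair: `sfl(u,v) = {x | (u,vx) not ≈_L ⊥}`. -/
def Sfl (L : Set (ℕ → A)) (u v : List A) : Set (List A) :=
  { x | ¬ ApproxBot L u (v ++ x) }

/-- `(u,v) ≡_L (u',v')`. -/
def EquivL (L : Set (ℕ → A)) (u v u' v' : List A) : Prop :=
  SimL L (u ++ v) (u' ++ v') ∧ Sfl L u v = Sfl L u' v'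

/-- `(u,v)` is pointed. -/
def IsPointed (L : Set (ℕ → A)) (u v : List A) : Prop :=
  ¬ ApproxBot L u v ∧
    ∀ u₁ u₂ : List A, SimL L (u₁ ++ u₂) u → ¬ ApproxBot L u₁ (u₂ ++ v) →
      Sfl L u v = Sfl L u₁ (u₂ ++ v)

/-- `(u,v) ≈_L (u',v')` (for pairs with nonempty second components). -/
def ApproxL (L : Set (ℕ → A)) (u v u' v' : List A) : Prop :=
  SimL L u u' ∧ SimL L (u ++ v) (u' ++ v') ∧
    ∀ x : List A, SimL L (u ++ v ++ x) u →
      (upW u (v ++ x) ∈ L ↔ upW u' (v' ++ x) ∈ L)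

/-- `L` is recognized by some (total) deterministic co-Büchi automaton. -/
def DCWRecognizable (L : Set (ℕ → A)) : Prop :=
  ∃ (Q : Type) (_ : Fintype Q) (M : CoBuchi A Q), M.Deterministic ∧ M.Lang = L

/-- IsPointed pairs. -/
def PointedPair (L : Set (ℕ → A)) : Type :=
  { p : List A × List A // IsPointed L p.1 p.2 }

/-- `≡_L` as a setoid on all pairs. -/
def equivLSetoid (L : Set (ℕ → A)) : Setoid (List A × List A) where
  r p q := EquivL L p.1 p.2 q.1 q.2
  iseqv := {
    refl := fun p => ⟨fun w => Iff.rfl, rfl⟩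
    symm := fun h => ⟨fun w => (h.1 w).symm, h.2.symm⟩
    trans := fun h g => ⟨fun w => (h.1 w).trans (g.1 w), h.2.trans g.2⟩ }

/-- `≡_L` as a setoid on pointed pairs. -/
def canonSetoid (L : Set (ℕ → A)) : Setoid (PointedPair L) where
  r p q := EquivL L p.1.1 p.1.2 q.1.1 q.1.2
  iseqv := {
    refl := fun p => ⟨fun w => Iff.rfl, rfl⟩
    symm := fun h => ⟨fun w => (h.1 w).symm, h.2.symm⟩
    trans := fun h g => ⟨fun w => (h.1 w).trans (g.1 w), h.2.trans g.2⟩ }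

/-- States of the canonical automaton: `≡_L`-classes of pointed pairs. -/
def CanonState (L : Set (ℕ → A)) : Type := Quotient (canonSetoid L)

/-- The class `⟦u,v⟧` of a pointed pair. -/
def cls (L : Set (ℕ → A)) (u v : List A) (h : IsPointed L u v) : CanonState L :=
  Quotient.mk (canonSetoid L) ⟨(u, v), h⟩

/-- The canonical automaton `A_{≡_L}`. -/
def canonAut (L : Set (ℕ → A)) : CoBuchi A (CanonState L) where
  init := { s | ∃ (u v : List A) (h : IsPointed L u v),
              s = cls L u v h ∧ SimL L (u ++ v) [] }
  delta := { t |
    (∃ (u v : List A) (h : IsPointed L u v) (h' : IsPointed L u (v ++ [t.2.1])),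
        ¬ ApproxBot L u (v ++ [t.2.1]) ∧
        t.1 = cls L u v h ∧ t.2.2.1 = Rk.two ∧
        t.2.2.2 = cls L u (v ++ [t.2.1]) h') ∨
    (∃ (u v u' v' : List A) (h : IsPointed L u v) (h' : IsPointed L u' v'),
        SimL L (u ++ v ++ [t.2.1]) (u' ++ v') ∧
        t.1 = cls L u v h ∧ t.2.2.1 = Rk.one ∧ t.2.2.2 = cls L u' v' h') }

/-- `θ(u,v)`: states of `A_{≡_L}` reachable by reading `u` from an initial state
(any ranks) and then `v` via rank-2 transitions only. -/
def theta (L : Set (ℕ → A)) (u v : List A) : Set (CanonState L) :=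
  { q | ∃ p₀ ∈ (canonAut L).init, ∃ p,
          (canonAut L).Reach p₀ u p ∧ (canonAut L).SafeReach p v q }

/-- `(u,v)` is supported: `θ(u,v) ≠ ∅`. -/
def Supported (L : Set (ℕ → A)) (u v : List A) : Prop := (theta L u v).Nonempty

/-- `(u,v)` is double-supported: two distinct states of `θ(u,v)` in the same safe SCC. -/
def DoubleSupported (L : Set (ℕ → A)) (u v : List A) : Prop :=
  ∃ q ∈ theta L u v, ∃ q' ∈ theta L u v, q ≠ q' ∧ (canonAut L).SameSafeSCC q q'

/-- `(u,v)` is single-supported. -/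
def SingleSupported (L : Set (ℕ → A)) (u v : List A) : Prop :=
  Supported L u v ∧ ¬ DoubleSupported L u v

/-- `w` concatenated with itself `m` times. -/
def repCat (w : List A) : ℕ → List A
  | 0 => []
  | Nat.succ m => w ++ repCat w m

end LangDefs

section Pointed

variable {A : Type} [Nonempty A] {L : Set (ℕ → A)}

theorem ApproxBot.append {u w : List A} (hb : ApproxBot L u w) (y : List A) :
    ApproxBot L u (w ++ y) := by
  refine ⟨fun h => hb.1 (List.append_eq_nil_iff.mp h).1, fun x hx => ?_⟩
  simpa only [List.append_assoc] using hb.2 (y ++ x) (by simpa only [List.append_assoc] using hx)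

theorem sfl_append (u v y : List A) : Sfl L u (v ++ y) = (y ++ ·) ⁻¹' Sfl L u v := by
  ext x
  simp only [Sfl, Set.mem_ofPred_eq, Set.mem_preimage, List.append_assoc]

theorem IsPointed.append {u v : List A} (h : IsPointed L u v) {y : List A}
    (hb : ¬ ApproxBot L u (v ++ y)) : IsPointed L u (v ++ y) := by
  refine ⟨hb, fun u₁ u₂ hsim hnb => ?_⟩
  have hnb' : ¬ ApproxBot L u₁ (u₂ ++ v) := fun hb' => hnb (by
    simpa only [List.append_assoc] using hb'.append y)
  rw [← List.append_assoc, sfl_append, sfl_append, h.2 u₁ u₂ hsim hnb']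

end Pointed

theorem stmt2_general {A : Type} [Nonempty A] (L : Set (ℕ → A))
    (u v : List A) (h : IsPointed L u v) (a : A) :
    ApproxBot L u (v ++ [a]) ∨ IsPointed L u (v ++ [a]) :=
  or_iff_not_imp_left.2 h.append

/-- if `(u,v)` is pointed then for every letter `a`,
either `(u,va) ≈_L ⊥` or `(u,va)` is pointed. -/
theorem stmt2 {A : Type} [Nonempty A] [Fintype A] (L : Set (ℕ → A))
    (u v : List A) (h : IsPointed L u v) (a : A) :
    ApproxBot L u (v ++ [a]) ∨ IsPointed L u (v ++ [a]) :=
  stmt2_general L u v h a
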